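/- Let n ≥ 1 and (j_1,…,j_n) ∈ ℤ_{≥1}^n. If the total degree N = j_1 + j_2 + ⋯ + j_n is odd, then for every (q;p_1,…,p_{n−1}) ∈ I_n the generalized Dedekind sum s_{j_1,…,j_n}(q;p_1,…,p_{n−1}) = 0. -/

import Mathlib

/-!
The substitution `k ↦ -k` (mod `q`) permutes the summation range and replaces every argument
`t` of a periodic Bernoulli function by `-t` modulo `1`. Since `B̃_i(-t) = (-1)^i B̃_i(t)`, also
at the integers, the Dedekind sum equals `(-1)^N` times itself.
-/

open Finset

/-- The `k`-th periodic Bernoulli function (restricted to rational arguments):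
`B̃_k(t) = B_k({t})` for nonintegral `t` or `k ≠ 1`, and `B̃_1(t) = 0` at integers. -/
noncomputable def pBern (k : ℕ) (t : ℚ) : ℚ :=
  if k = 1 ∧ Int.fract t = 0 then 0
  else (Polynomial.bernoulli k).eval (Int.fract t)

/-- Generalized Dedekind sum `s_{i_1,…,i_{m+1}}(q; p_1,…,p_m)` (dimension `n = m+1`). -/
noncomputable def gDedekind (m : ℕ) (i : Fin (m + 1) → ℕ) (q : ℕ) (p : Fin m → ℤ) : ℚ :=
  ∑ k : Fin m → Fin q,
    (∏ j : Fin m, pBern (i j.castSucc) ((k j : ℚ) / q)) *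
      pBern (i (Fin.last m)) ((∑ j : Fin m, (p j : ℚ) * (k j : ℚ)) / q)

/-- Todd coefficient `t_{i_1,…,i_{m+1}}(q; p_1,…,p_m)` (dimension `n = m+1`). -/
noncomputable def toddCoeff (m : ℕ) (i : Fin (m + 1) → ℕ) (q : ℕ) (p : Fin m → ℤ) : ℚ :=
  ∑ k : Fin m → Fin q,
    (∏ j : Fin m, (Polynomial.bernoulli (i j.castSucc)).eval ((k j : ℚ) / q)) *
      (Polynomial.bernoulli (i (Fin.last m))).eval
        (Int.fract ((∑ j : Fin m, (p j : ℚ) * (k j : ℚ)) / q))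

/-- `d_{N,n}`: the lcm of the denominators of `B_{m_1}⋯B_{m_n}/(m_1!⋯m_n!)` over all
`(m_1,…,m_n) ∈ ℤ_{≥0}^n` with `m_1+⋯+m_n = N`. -/
noncomputable def dConst (N n : ℕ) : ℕ :=
  (Finset.Nat.antidiagonalTuple n N).lcm fun t =>
    (∏ i, bernoulli (t i) / ((t i).factorial : ℚ)).den

/-- The family `p_1,…,p_{m+1}` with the convention `p_{m+1} = -1`, as units of `ZMod q`. -/
noncomputable def pUnit (m : ℕ) (q : ℕ) (p : Fin m → ℕ) (hp : ∀ j, Nat.Coprime (p j) q) :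
    Fin (m + 1) → (ZMod q)ˣ :=
  Fin.lastCases (-1) (fun j => ZMod.unitOfCoprime (p j) (hp j))

theorem pBern_neg (k : ℕ) (t : ℚ) : pBern k (-t) = (-1) ^ k * pBern k t := by
  by_cases ht : Int.fract t = 0
  · have hnt : Int.fract (-t) = 0 := Int.fract_neg_eq_zero.mpr ht
    rcases eq_or_ne k 1 with rfl | hk
    · simp [pBern, ht, hnt]
    · simp only [pBern, hk, false_and, if_false, ht, hnt, Polynomial.bernoulli_eval_zero]
      rcases Nat.even_or_odd k with he | ho
      · rw [he.neg_one_pow, one_mul]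
      · rw [bernoulli_eq_zero_of_odd ho (lt_of_le_of_ne ho.pos hk.symm), mul_zero]
  · have hnt : Int.fract (-t) = 1 - Int.fract t := Int.fract_neg ht
    have hnt0 : Int.fract (-t) ≠ 0 := by
      rw [hnt, sub_ne_zero]; exact (Int.fract_lt_one t).ne'
    rw [pBern, pBern, if_neg (fun h => hnt0 h.2), if_neg (fun h => ht h.2), hnt,
      Polynomial.bernoulli_eval_one_sub]

theorem pBern_intCast_div_of_modEq (k : ℕ) {q : ℕ} {a b : ℤ} (h : a ≡ b [ZMOD q]) :
    pBern k (a / q) = pBern k (b / q) := by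
  rw [pBern, pBern, Int.fract_div_intCast_eq_div_intCast_mod,
    Int.fract_div_intCast_eq_div_intCast_mod, h.eq]

theorem pBern_intCast_div_of_modEq_neg (k : ℕ) {q : ℕ} {a b : ℤ} (h : a ≡ -b [ZMOD q]) :
    pBern k (a / q) = (-1) ^ k * pBern k (b / q) := by
  rw [pBern_intCast_div_of_modEq k h, Int.cast_neg, neg_div, pBern_neg]

theorem Fin.val_neg_modEq {q : ℕ} (a : Fin q) : ((-a : Fin q) : ℤ) ≡ -(a : ℤ) [ZMOD q] := by
  rw [Fin.val_neg', Int.natCast_mod, Nat.cast_sub a.isLt.le]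
  exact (Int.mod_modEq _ _).trans (by simp [Int.ModEq])

theorem gDedekind_eq_neg_one_pow_mul_self (m : ℕ) (i : Fin (m + 1) → ℕ) (q : ℕ)
    (p : Fin m → ℤ) : gDedekind m i q p = (-1) ^ (∑ l, i l) * gDedekind m i q p := by
  unfold gDedekind
  rw [mul_sum, eq_comm]
  refine Fintype.sum_equiv (Equiv.piCongrRight fun _ => Equiv.neg (Fin q)) _ _ fun k => ?_
  simp only [Equiv.piCongrRight_apply, Equiv.neg_apply, Pi.map_apply]
  have hprod : ∏ j : Fin m, pBern (i j.castSucc) (((-k j : Fin q) : ℚ) / q)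
      = (-1) ^ (∑ j : Fin m, i j.castSucc) * ∏ j, pBern (i j.castSucc) ((k j : ℚ) / q) := by
    rw [← prod_pow_eq_pow_sum, ← prod_mul_distrib]
    exact prod_congr rfl fun j _ => by
      simpa only [Int.cast_natCast] using
        pBern_intCast_div_of_modEq_neg (i j.castSucc) (Fin.val_neg_modEq (k j))
  have hlast : pBern (i (Fin.last m)) ((∑ j, (p j : ℚ) * ((-k j : Fin q) : ℚ)) / q)
      = (-1) ^ i (Fin.last m) * pBern (i (Fin.last m)) ((∑ j, (p j : ℚ) * (k j : ℚ)) / q) := by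
    have hmod : ∑ j, p j * ((-k j : Fin q) : ℤ) ≡ -∑ j, p j * (k j : ℤ) [ZMOD q] := by
      rw [← sum_neg_distrib]
      exact Int.ModEq.sum fun j _ => by
        simpa only [mul_neg] using (Fin.val_neg_modEq (k j)).mul_left (p j)
    exact_mod_cast pBern_intCast_div_of_modEq_neg _ hmod
  rw [hprod, hlast, Fin.sum_univ_castSucc, pow_add]
  ring

theorem dedekind_sum_odd_vanishes_general
    (m : ℕ) (j : Fin (m + 1) → ℕ) (hodd : Odd (∑ i, j i))
    (q : ℕ)
    (p : Fin m → ℕ) :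
    gDedekind m j q (fun a => (p a : ℤ)) = 0 := by
  have h := gDedekind_eq_neg_one_pow_mul_self m j q (fun a => (p a : ℤ))
  rw [hodd.neg_one_pow] at h
  linarith

/-- If the total degree `N = j_1 + ⋯ + j_n` is odd, then the generalized Dedekind sum
`s_{j_1,…,j_n}(q;p_1,…,p_{n-1})` vanishes, for every `(q;p_1,…,p_{n-1}) ∈ I_n`.
Here the dimension is `n = m + 1`. -/
theorem dedekind_sum_odd_vanishes
    (m : ℕ) (j : Fin (m + 1) → ℕ) (hj : ∀ i, 1 ≤ j i) (hodd : Odd (∑ i, j i))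
    (q : ℕ) (hq : 0 < q)
    (p : Fin m → ℕ) (hp : ∀ a, 0 < p a ∧ p a < q ∧ Nat.Coprime (p a) q) :
    gDedekind m j q (fun a => (p a : ℤ)) = 0 :=
  dedekind_sum_odd_vanishes_general m j hodd q p
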